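/- Let S ⊆ ℝ^d and let φ : ℝ^d → ℝ^e be an affine map. Then h(φ(S)) ≤ h(S), where h denotes the Helly number of the family of S-convex (respectively φ(S)-convex) sets. -/
import Mathlib


def HellyCond {V : Type*} [AddCommGroup V] [Module ℝ V] (S : Set V) (k : ℕ) : Prop :=
  ∀ (m : ℕ) (C : Fin m → Set V), (∀ i, Convex ℝ (C i)) →
    S ∩ ⋂ i, C i = ∅ →
    ∃ I : Finset (Fin m), I.card ≤ k ∧ S ∩ ⋂ i ∈ I, C i = ∅

noncomputable def hellyNumber {V : Type*} [AddCommGroup V] [Module ℝ V] (S : Set V) : ℕ∞ :=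
  sInf {k : ℕ∞ | ∃ n : ℕ, k = n ∧ HellyCond S n}

lemma hellyCond_image {d e : ℕ} (S : Set (Fin d → ℝ))
    (φ : (Fin d → ℝ) →ᵃ[ℝ] (Fin e → ℝ)) {n : ℕ} (h : HellyCond S n) :
    HellyCond (φ '' S) n := by
  intro m C hC hempty
  obtain ⟨I, hI, hIe⟩ := h m (fun i => φ ⁻¹' C i)
    (fun i => (hC i).affine_preimage φ)
    (by
      rw [Set.eq_empty_iff_forall_notMem]
      rintro x ⟨hxS, hx⟩
      have : φ x ∈ (φ '' S) ∩ ⋂ i, C i :=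
        ⟨⟨x, hxS, rfl⟩, Set.mem_iInter.2 fun i => Set.mem_iInter.1 hx i⟩
      rw [hempty] at this
      exact this.elim)
  refine ⟨I, hI, ?_⟩
  rw [Set.eq_empty_iff_forall_notMem]
  rintro y ⟨⟨x, hxS, rfl⟩, hy⟩
  have : x ∈ S ∩ ⋂ i ∈ I, φ ⁻¹' C i :=
    ⟨hxS, Set.mem_iInter₂.2 fun i hi => Set.mem_iInter₂.1 hy i hi⟩
  rw [hIe] at this
  exact this.elim

theorem helly_affine_image {d e : ℕ} (S : Set (Fin d → ℝ))
    (φ : (Fin d → ℝ) →ᵃ[ℝ] (Fin e → ℝ)) :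
    hellyNumber (φ '' S) ≤ hellyNumber S := by
  apply sInf_le_sInf
  rintro k ⟨n, rfl, hn⟩
  exact ⟨n, rfl, hellyCond_image S φ hn⟩
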